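/- arXiv:1206.3630 — 4 statements merged into one kernel-verified Lean document; each statement's English description precedes it below -/
import Mathlib

section
/- Let n ≥ 2, K a perfect field, and A, B ∈ M_n(K) such that the characteristic polynomial of A is irreducible over K. If A and B have a common eigenvector over some extension field of K, then AB = BA. -/
open Polynomial Matrix

/-- `aeval` commutes with matrix transpose. -/
lemma aeval_transpose_eq {R : Type*} [CommRing R] {m : Type*} [Fintype m] [DecidableEq m]
    (A : Matrix m m R) (p : R[X]) :
    Polynomial.aeval Aᵀ p = (Polynomial.aeval A p)ᵀ := by
  induction p using Polynomial.induction_on' with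
  | add p q hp hq => simp [hp, hq]
  | monomial k a =>
      simp only [aeval_monomial, ← Matrix.transpose_pow]
      rw [Matrix.transpose_mul]
      ext i j
      simp [Matrix.algebraMap_matrix_apply, Matrix.mul_apply, Finset.sum_ite_eq,
        Finset.sum_ite_eq', mul_comm]

/-- `aeval` commutes with restriction to an invariant submodule. -/
lemma aeval_restrict_apply {K V : Type*} [Field K] [AddCommGroup V] [Module K V]
    (f : V →ₗ[K] V) {p : Submodule K V} (h : ∀ x ∈ p, f x ∈ p) (q : K[X]) (x : p) :
    ((Polynomial.aeval (f.restrict h) q) x : V) = (Polynomial.aeval f q) x := by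
  induction q using Polynomial.induction_on' with
  | add q r hq hr => simp [hq, hr]
  | monomial k a =>
      simp only [aeval_monomial, Module.End.mul_apply, Module.algebraMap_end_apply,
        LinearMap.smul_apply]
      rw [Module.End.pow_restrict]
      simp [LinearMap.restrict_apply]

/-- Let `n ≥ 2`, `K` perfect, `A, B ∈ Mₙ(K)` with `χ_A` irreducible over `K`. If `A` and `B`
have a common eigenvector over an extension field `L` of `K`, then `AB = BA`. -/
theorem stmt_5 {n : ℕ} (hn : 2 ≤ n) {K : Type*} [Field K] [PerfectField K]
    {L : Type*} [Field L] [Algebra K L]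
    (A B : Matrix (Fin n) (Fin n) K)
    (hirr : Irreducible A.charpoly)
    (u : Fin n → L) (hu : u ≠ 0) (α β : L)
    (hA : (A.map (algebraMap K L)).mulVec u = α • u)
    (hB : (B.map (algebraMap K L)).mulVec u = β • u) :
    A * B = B * A := by
  classical
  -- the linear functional `v ↦ ∑ j, v j • u j`
  set T : (Fin n → K) →ₗ[K] L :=
    { toFun := fun v => ∑ j, v j • u j
      map_add' := by intro v w; simp [add_smul, Finset.sum_add_distrib]
      map_smul' := by intro c v; simp [mul_smul, Finset.smul_sum] } with hTdef
  have hTapp : ∀ v : Fin n → K, T v = ∑ j, v j • u j := fun v => rfl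
  -- key eigen computation
  have hrow : ∀ i, ∑ j, A i j • u j = α • u i := by
    intro i
    have := congr_fun hA i
    simpa [Matrix.mulVec, dotProduct, Algebra.smul_def] using this
  have hT1 : ∀ v, T (Aᵀ.mulVec v) = α • T v := by
    intro v
    rw [hTapp, hTapp]
    have : ∀ j, (Aᵀ.mulVec v) j = ∑ i, A i j * v i := by
      intro j; simp [Matrix.mulVec, dotProduct, Matrix.transpose_apply]
    calc ∑ j, (Aᵀ.mulVec v) j • u j = ∑ j, ∑ i, (A i j * v i) • u j := by
          simp_rw [this, Finset.sum_smul]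
      _ = ∑ i, ∑ j, (A i j * v i) • u j := Finset.sum_comm
      _ = ∑ i, v i • ∑ j, A i j • u j := by
          refine Finset.sum_congr rfl fun i _ => ?_
          rw [Finset.smul_sum]
          refine Finset.sum_congr rfl fun j _ => ?_
          rw [mul_comm, mul_smul]
      _ = ∑ i, v i • (α • u i) := by simp_rw [hrow]
      _ = α • ∑ i, v i • u i := by
          rw [Finset.smul_sum]; exact Finset.sum_congr rfl fun i _ => smul_comm _ _ _
  -- the kernel of T is invariant under `mulVecLin Aᵀ`
  set f : (Fin n → K) →ₗ[K] (Fin n → K) := Matrix.toLinAlgEquiv' Aᵀ with hfdef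
  have hfapp : ∀ v, f v = Aᵀ.mulVec v := fun v => rfl
  have hW : ∀ x ∈ LinearMap.ker T, f x ∈ LinearMap.ker T := by
    intro x hx
    rw [LinearMap.mem_ker] at hx ⊢
    rw [hfapp, hT1, hx, smul_zero]
  -- T is injective
  have hker : LinearMap.ker T = ⊥ := by
    by_contra hbot
    have hnt : Nontrivial (LinearMap.ker T) :=
      Submodule.nontrivial_iff_ne_bot.mpr hbot
    set g := f.restrict hW with hgdef
    have hming : Polynomial.aeval g A.charpoly = 0 := by
      have hf0 : Polynomial.aeval f A.charpoly = 0 := by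
        rw [hfdef, Polynomial.aeval_algEquiv]
        simp only [AlgHom.coe_comp, Function.comp_apply, AlgEquiv.coe_algHom]
        rw [aeval_transpose_eq, Matrix.aeval_self_charpoly]
        simp
      refine LinearMap.ext fun x => Subtype.ext ?_
      have := aeval_restrict_apply f hW A.charpoly x
      rw [hf0] at this
      simpa using this
    have hdvd : minpoly K g ∣ A.charpoly := minpoly.dvd _ _ hming
    have hgint : IsIntegral K g := g.isIntegral
    have hpos : 0 < (minpoly K g).natDegree := minpoly.natDegree_pos hgint
    have hassoc : Associated (minpoly K g) A.charpoly := by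
      obtain ⟨c, hc⟩ := hdvd
      rcases hirr.isUnit_or_isUnit hc with h | h
      · exact absurd (Polynomial.natDegree_eq_zero_of_isUnit h) (by omega)
      · exact hc ▸ (associated_mul_unit_left _ _ h).symm
    have heq : minpoly K g = A.charpoly :=
      Polynomial.eq_of_monic_of_associated (minpoly.monic hgint) A.charpoly_monic hassoc
    have hd1 : (minpoly K g).natDegree ≤ g.charpoly.natDegree :=
      Polynomial.natDegree_le_of_dvd (LinearMap.minpoly_dvd_charpoly g)
        (g.charpoly_monic.ne_zero)
    have hd2 : g.charpoly.natDegree = Module.finrank K (LinearMap.ker T) :=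
      g.charpoly_natDegree
    have hd3 : A.charpoly.natDegree = n := by
      rw [Matrix.charpoly_natDegree_eq_dim, Fintype.card_fin]
    have htop : LinearMap.ker T = ⊤ := by
      apply Submodule.eq_top_of_finrank_eq
      have h1 : n ≤ Module.finrank K (LinearMap.ker T) := by
        calc n = A.charpoly.natDegree := hd3.symm
          _ = (minpoly K g).natDegree := by rw [heq]
          _ ≤ g.charpoly.natDegree := hd1
          _ = _ := hd2
      have h2 : Module.finrank K (LinearMap.ker T) ≤ Module.finrank K (Fin n → K) :=
        (LinearMap.ker T).finrank_le
      have h3 : Module.finrank K (Fin n → K) = n := by simp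
      omega
    apply hu
    funext j
    have : T (Pi.single j 1) = 0 := by
      have : Pi.single j (1 : K) ∈ LinearMap.ker T := htop ▸ Submodule.mem_top
      rwa [LinearMap.mem_ker] at this
    rw [hTapp] at this
    simpa [Pi.single_apply, Finset.sum_ite_eq'] using this
  -- finish: rows of AB - BA are in the kernel of T
  have hC : ∀ M : Matrix (Fin n) (Fin n) K,
      (M.map (algebraMap K L)).mulVec u = 0 → M = 0 := by
    intro M hM
    ext i j
    have hrowM : M i ∈ LinearMap.ker T := by
      rw [LinearMap.mem_ker, hTapp]
      have := congr_fun hM i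
      simpa [Matrix.mulVec, dotProduct, Algebra.smul_def] using this
    rw [hker, Submodule.mem_bot] at hrowM
    exact congr_fun hrowM j
  have key : ((A * B - B * A).map (algebraMap K L)).mulVec u = 0 := by
    rw [Matrix.map_sub _ (fun a b => map_sub (algebraMap K L) a b), Matrix.map_mul, Matrix.map_mul, Matrix.sub_mulVec,
      ← Matrix.mulVec_mulVec, ← Matrix.mulVec_mulVec, hB, hA,
      Matrix.mulVec_smul, Matrix.mulVec_smul, hA, hB, smul_comm, sub_self]
  exact sub_eq_zero.mp (hC _ key)
end

section
/- Let K be a perfect field and A, B ∈ M_n(K) such that the characteristic polynomial of A is irreducible over K. If A and B have a common invariant hyperplane (subspace of dimension n−1) over some extension field of K, then AB = BA. -/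
/-!
Over `L`, the quotient of `Lⁿ` by the hyperplane `H` is one-dimensional, so `A` and `B` act on it
by commuting scalars and the commutator `C = AB - BA` maps `Lⁿ` into `H`. The vectors of `Kⁿ`
that land in `H` form an `A`-invariant `K`-subspace containing the image of `C`. As `χ_A` is
irreducible, `A` has no invariant subspaces other than `0` and `Kⁿ`; so if `C ≠ 0`, then `Kⁿ ⊆ H`,
which forces `H = Lⁿ`, contradicting its dimension.
-/

open Polynomial Module

namespace Module.End

variable {K V : Type*} [Field K] [AddCommGroup V] [Module K V]

theorem commute_of_finrank_le_one [FiniteDimensional K V] (hV : finrank K V ≤ 1)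
    (f g : Module.End K V) : Commute f g := by
  rcases Nat.le_one_iff_eq_zero_or_eq_one.mp hV with h0 | h1
  · have : Subsingleton V := finrank_zero_iff.mp h0
    exact Subsingleton.elim _ _
  · obtain ⟨c, rfl, -⟩ := f.existsUnique_eq_smul_id_of_finrank_eq_one h1
    rw [← one_eq_id]
    exact (Commute.one_left g).smul_left c

theorem commutator_apply_mem_of_finrank_quotient_le_one [FiniteDimensional K V]
    {f g : Module.End K V} {H : Submodule K V} (hf : ∀ v ∈ H, f v ∈ H) (hg : ∀ v ∈ H, g v ∈ H)
    (hH : finrank K (V ⧸ H) ≤ 1) (v : V) : (f * g - g * f) v ∈ H := by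
  have hcomm := (commute_of_finrank_le_one hH (H.mapQ H f hf) (H.mapQ H g hg)).eq
  rw [LinearMap.sub_apply, ← Submodule.Quotient.mk_eq_zero, Submodule.Quotient.mk_sub, sub_eq_zero]
  simpa only [Module.End.mul_apply, Submodule.mapQ_apply] using
    LinearMap.congr_fun hcomm (Submodule.Quotient.mk v)

theorem aeval_restrict_apply {f : Module.End K V} {W : Submodule K V} (hW : ∀ v ∈ W, f v ∈ W)
    (p : K[X]) (w : W) : (aeval (f.restrict hW) p w : V) = aeval f p w := by
  induction p using Polynomial.induction_on' with
  | add p q hp hq => simp only [map_add, LinearMap.add_apply, Submodule.coe_add, hp, hq]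
  | monomial k a =>
    simp only [aeval_monomial, mul_apply, algebraMap_end_apply, SetLike.val_smul]
    rw [pow_restrict]
    rfl

theorem eq_top_of_irreducible_charpoly [FiniteDimensional K V] {f : Module.End K V}
    (hf : Irreducible f.charpoly) {W : Submodule K V} (hW : ∀ v ∈ W, f v ∈ W) (hW0 : W ≠ ⊥) :
    W = ⊤ := by
  have : Nontrivial W := Submodule.nontrivial_iff_ne_bot.mpr hW0
  set g := f.restrict hW
  have hg : aeval g f.charpoly = 0 := by
    ext w
    rw [aeval_restrict_apply, LinearMap.aeval_self_charpoly]
    rfl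
  have hmin : minpoly K g = f.charpoly :=
    eq_of_monic_of_associated (minpoly.monic (Algebra.IsIntegral.isIntegral g)) f.charpoly_monic
      (((hf.dvd_iff).mp (minpoly.dvd K g hg)).resolve_left (minpoly.not_isUnit K g)).symm
  refine Submodule.eq_top_of_finrank_eq (le_antisymm (Submodule.finrank_le W) ?_)
  calc finrank K V = (minpoly K g).natDegree := by rw [hmin, f.charpoly_natDegree]
    _ ≤ g.charpoly.natDegree := natDegree_le_of_dvd g.minpoly_dvd_charpoly g.charpoly_monic.ne_zero
    _ = finrank K W := g.charpoly_natDegree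

end Module.End

theorem Submodule.eq_top_of_forall_algebraMap_comp_mem {K L ι : Type*} [CommSemiring K]
    [Semiring L] [Algebra K L] [Finite ι] {H : Submodule L (ι → L)}
    (h : ∀ u : ι → K, algebraMap K L ∘ u ∈ H) : H = ⊤ := by
  classical
  rw [eq_top_iff, ← (Pi.basisFun L ι).span_eq, Submodule.span_le]
  rintro _ ⟨i, rfl⟩
  have hi : algebraMap K L ∘ Pi.single i 1 = Pi.basisFun L ι i := by
    ext j
    rcases eq_or_ne j i with rfl | hj <;> simp [*]
  exact hi ▸ h (Pi.single i 1)

open Matrix in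
theorem stmt_6_general {n : ℕ} {K : Type*} [Field K]
    {L : Type*} [Field L] [Algebra K L]
    (A B : Matrix (Fin n) (Fin n) K)
    (hirr : Irreducible A.charpoly)
    (H : Submodule L (Fin n → L))
    (hH : Module.finrank L H = n - 1)
    (hA : ∀ v ∈ H, (A.map (algebraMap K L)).mulVec v ∈ H)
    (hB : ∀ v ∈ H, (B.map (algebraMap K L)).mulVec v ∈ H) :
    A * B = B * A := by
  let ι : (Fin n → K) →ₗ[K] (Fin n → L) := LinearMap.compLeft (Algebra.linearMap K L) (Fin n)
  have hι (M : Matrix (Fin n) (Fin n) K) (u : Fin n → K) :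
      ι (M *ᵥ u) = M.map (algebraMap K L) *ᵥ ι u :=
    funext ((algebraMap K L).map_mulVec M u)
  let W := (H.restrictScalars K).comap ι
  have hAW : ∀ u ∈ W, A.mulVecLin u ∈ W := fun u hu => by
    simpa [W, hι] using hA _ hu
  have hQ : finrank L ((Fin n → L) ⧸ H) ≤ 1 := by
    have := H.finrank_quotient_add_finrank
    rw [hH, finrank_fin_fun] at this
    omega
  have hCW (u : Fin n → K) : (A * B - B * A) *ᵥ u ∈ W := by
    simpa [W, hι, Matrix.sub_mulVec, ← Matrix.mulVec_mulVec] using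
      Module.End.commutator_apply_mem_of_finrank_quotient_le_one
        (f := (A.map (algebraMap K L)).mulVecLin) (g := (B.map (algebraMap K L)).mulVecLin)
        hA hB hQ (ι u)
  by_contra hAB
  have hW0 : W ≠ ⊥ := fun hW => hAB <| sub_eq_zero.mp <| Matrix.ext_of_mulVec_single fun i => by
    rw [zero_mulVec]
    simpa [hW] using hCW (Pi.single i 1)
  have hWtop := Module.End.eq_top_of_irreducible_charpoly (A.charpoly_mulVecLin ▸ hirr) hAW hW0
  have hHtop : H = ⊤ := Submodule.eq_top_of_forall_algebraMap_comp_mem fun u =>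
    (hWtop ▸ Submodule.mem_top : u ∈ W)
  rw [hHtop, finrank_top, finrank_fin_fun] at hH
  obtain rfl : n = 0 := by omega
  exact hAB (Subsingleton.elim _ _)

/-- Let `K` be perfect and `A, B ∈ Mₙ(K)` with `χ_A` irreducible over `K`. If `A` and `B`
have a common invariant hyperplane (dimension `n - 1`) over an extension field `L` of `K`,
then `AB = BA`. -/
theorem stmt_6 {n : ℕ} {K : Type*} [Field K] [PerfectField K]
    {L : Type*} [Field L] [Algebra K L]
    (A B : Matrix (Fin n) (Fin n) K)
    (hirr : Irreducible A.charpoly)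
    (H : Submodule L (Fin n → L))
    (hH : Module.finrank L H = n - 1) (hHne : H ≠ ⊤)
    (hA : ∀ v ∈ H, (A.map (algebraMap K L)).mulVec v ∈ H)
    (hB : ∀ v ∈ H, (B.map (algebraMap K L)).mulVec v ∈ H) :
    A * B = B * A :=
  stmt_6_general A B hirr H hH hA hB
end

section
/- Let n ≥ 3, K a perfect field, and A, B ∈ M_n(K) such that χ_A is irreducible over K and the Galois group of χ_A over K is the full symmetric group S_n or the alternating group A_n. If A and B have a common invariant proper nonzero subspace over some extension field of K, then AB = BA. -/
instance splitsFact {K : Type*} [Field K] (p : Polynomial K) :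
    Fact ((p.map (algebraMap K p.SplittingField)).Splits) :=
  ⟨Polynomial.SplittingField.splits p⟩

/-!
Over a field containing the roots of `χ_A`, which are distinct since `χ_A` is irreducible over
the perfect field `K`, `A` is diagonalisable with one-dimensional eigenlines; let `P ρ` be the
projection onto the `ρ`-eigenline along the others, a Lagrange interpolation polynomial in `A`.
Over an algebraically closed field containing both `L` and the roots, a common invariant subspace
is the sum of the eigenlines it contains; the set `T` of the corresponding roots is nonempty and
proper, and `B`-invariance gives `P μ * B * P λ = 0` for `λ ∈ T`, `μ ∉ T`. Galois automorphisms
transport these relations along their action on the roots, which contains the alternating group;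
for `n ≥ 3` every ordered pair of distinct roots is the image of such a pair `(λ, μ)`. Hence
`P μ * B * P λ = 0` whenever `λ ≠ μ`: `B` preserves every eigenline of `A`, so `A` and `B` commute.
-/

section

open Polynomial Module Finset

variable {F : Type*} [Field F] {ι : Type*}

namespace Lagrange

variable [DecidableEq ι]

theorem basis_map {F' : Type*} [Field F'] (ψ : F →+* F') (s : Finset ι) (v : ι → F) (i : ι) :
    (Lagrange.basis s v i).map ψ = Lagrange.basis s (ψ ∘ v) i := by
  simp [Lagrange.basis, Lagrange.basisDivisor, Polynomial.map_prod]

theorem basis_univ_comp_equiv [Fintype ι] (v : ι → F) (σ : ι ≃ ι) (i : ι) :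
    Lagrange.basis univ (v ∘ σ) i = Lagrange.basis univ v (σ i) := by
  simp only [Lagrange.basis, Function.comp_apply]
  exact Finset.prod_equiv σ (by simp) (fun _ _ => rfl)

end Lagrange

variable [Fintype ι]

namespace Module.End

variable {V : Type*} [AddCommGroup V] [Module F V] {f g : End F V}

theorem aeval_apply_mem {p : Submodule F V} (hp : ∀ x ∈ p, f x ∈ p) (q : F[X]) {x : V}
    (hx : x ∈ p) : aeval f q x ∈ p := by
  induction q using Polynomial.induction_on' with
  | add q r hq hr => rw [map_add, LinearMap.add_apply]; exact p.add_mem hq hr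
  | monomial k a =>
    rw [aeval_monomial, mul_apply, algebraMap_end_apply]
    exact p.smul_mem a (pow_apply_mem_of_forall_mem k hp x hx)

theorem exists_basis_apply_eq_smul [FiniteDimensional F V] {e : ι → F}
    (he : Function.Injective e) (hev : ∀ i, f.HasEigenvalue (e i))
    (hcard : Fintype.card ι = finrank F V) : ∃ b : Basis ι F V, ∀ i, f (b i) = e i • b i := by
  choose v hv using fun i => (hev i).exists_hasEigenvector
  refine ⟨basisOfLinearIndependentOfCardEqFinrank' v
    (eigenvectors_linearIndependent' f e he v hv) hcard, fun i => ?_⟩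
  simpa using mem_eigenspace_iff.1 (hv i).1

variable [DecidableEq ι] {e : ι → F} (b : Basis ι F V) (hb : ∀ i, f (b i) = e i • b i)
  (he : Function.Injective e)
include hb he

theorem aeval_lagrangeBasis_eq_smulRight (i : ι) :
    aeval f (Lagrange.basis univ e i) = (b.coord i).smulRight (b i) := by
  refine b.ext fun j => ?_
  rw [aeval_apply_of_mem_apply_eq_smul (hb j), LinearMap.smulRight_apply, Basis.coord_apply,
    Basis.repr_self]
  rcases eq_or_ne i j with rfl | hij
  · simp [Lagrange.eval_basis_self he.injOn (mem_univ i)]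
  · simp [Lagrange.eval_basis_of_ne hij (mem_univ j), Finsupp.single_eq_of_ne hij]

theorem basis_mem_of_repr_ne_zero {p : Submodule F V} (hp : ∀ x ∈ p, f x ∈ p) {x : V}
    (hx : x ∈ p) {i : ι} (hi : b.repr x i ≠ 0) : b i ∈ p := by
  have := aeval_apply_mem hp (Lagrange.basis univ e i) hx
  rw [aeval_lagrangeBasis_eq_smulRight b hb he, LinearMap.smulRight_apply, Basis.coord_apply]
    at this
  exact (p.smul_mem_iff hi).1 this

theorem aeval_lagrangeBasis_mul_mul_eq_zero {p : Submodule F V} (hpf : ∀ x ∈ p, f x ∈ p)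
    (hpg : ∀ x ∈ p, g x ∈ p) {l m : ι} (hl : b l ∈ p) (hm : b m ∉ p) :
    aeval f (Lagrange.basis univ e m) * g * aeval f (Lagrange.basis univ e l) = 0 := by
  have hglm : b.repr (g (b l)) m = 0 := by
    by_contra h
    exact hm (basis_mem_of_repr_ne_zero b hb he hpf (hpg _ hl) h)
  ext x
  simp [aeval_lagrangeBasis_eq_smulRight b hb he, hglm]

theorem commute_of_aeval_lagrangeBasis_mul_mul_eq_zero
    (h : ∀ a c, a ≠ c →
      aeval f (Lagrange.basis univ e c) * g * aeval f (Lagrange.basis univ e a) = 0) :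
    Commute f g := by
  have hdiag : ∀ a, g (b a) = b.repr (g (b a)) a • b a := fun a => by
    have hc : ∀ c ≠ a, b.repr (g (b a)) c = 0 := fun c hc => by
      simpa [aeval_lagrangeBasis_eq_smulRight b hb he, b.ne_zero] using
        LinearMap.congr_fun (h a c hc.symm) (b a)
    conv_lhs => rw [← b.sum_repr (g (b a))]
    exact Finset.sum_eq_single a (fun c _ hca => by rw [hc c hca, zero_smul]) (by simp)
  refine b.ext fun a => ?_
  rw [mul_apply, mul_apply, hb, map_smul, hdiag, map_smul, hb, smul_comm]

end Module.End

namespace Matrix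

variable {K : Type*} [Field K] [Algebra K F] {n : Type*} [Fintype n] [DecidableEq n]
  {e : ι → F}

theorem exists_basis_toLin'_apply_eq_smul {A : Matrix n n K} (he : Function.Injective e)
    (hcard : Fintype.card ι = Fintype.card n) (hroot : ∀ i, aeval (e i) A.charpoly = 0) :
    ∃ b : Basis ι F (n → F), ∀ i, toLin' (A.map (algebraMap K F)) (b i) = e i • b i := by
  refine Module.End.exists_basis_apply_eq_smul he (fun i => ?_)
    (by rwa [finrank_fintype_fun_eq_card])
  rw [Module.End.hasEigenvalue_iff_isRoot_charpoly, charpoly_toLin', charpoly_map, IsRoot,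
    eval_map_algebraMap, hroot]

variable [DecidableEq ι]

/-- When `e` enumerates the distinct eigenvalues of `A`, this is the projection onto the
`e i`-eigenline along the other eigenlines. -/
noncomputable def spectralProj (A : Matrix n n K) (e : ι → F) (i : ι) : Matrix n n F :=
  aeval (A.map (algebraMap K F)) (Lagrange.basis univ e i)

variable (A B : Matrix n n K)

theorem toLin'_spectralProj (i : ι) :
    toLin' (A.spectralProj e i) =
      aeval (toLin' (A.map (algebraMap K F))) (Lagrange.basis univ e i) :=
  (aeval_algHom_apply toLinAlgEquiv' _ _).symm

theorem map_spectralProj {F' : Type*} [Field F'] [Algebra K F'] (ψ : F →ₐ[K] F') (i : ι) :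
    (A.spectralProj e i).map ψ = A.spectralProj (ψ ∘ e) i := by
  have hscalar : (algebraMap F' (Matrix n n F')).comp (ψ : F →+* F') =
      (ψ : F →+* F').mapMatrix.comp (algebraMap F (Matrix n n F)) := by
    ext; simp [algebraMap_matrix_apply, apply_ite ψ]
  change (ψ : F →+* F').mapMatrix (aeval _ _) = _
  rw [map_aeval_eq_aeval_map hscalar, Lagrange.basis_map, RingHom.mapMatrix_apply, map_map,
    spectralProj]
  congr 2
  ext
  simp

theorem spectralProj_comp_equiv (σ : ι ≃ ι) (i : ι) :
    A.spectralProj (e ∘ σ) i = A.spectralProj e (σ i) := by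
  rw [spectralProj, Lagrange.basis_univ_comp_equiv, spectralProj]

theorem spectralProj_mul_mul_comp_eq_zero_iff {F' : Type*} [Field F'] [Algebra K F']
    (ψ : F →ₐ[K] F') (l m : ι) :
    A.spectralProj (ψ ∘ e) m * B.map (algebraMap K F') * A.spectralProj (ψ ∘ e) l = 0 ↔
      A.spectralProj e m * B.map (algebraMap K F) * A.spectralProj e l = 0 := by
  have hmap : (A.spectralProj e m * B.map (algebraMap K F) * A.spectralProj e l).map ψ =
      A.spectralProj (ψ ∘ e) m * B.map (algebraMap K F') * A.spectralProj (ψ ∘ e) l := by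
    simp only [← map_spectralProj, Matrix.map_mul, map_map]
    congr 3
    ext
    simp
  rw [← hmap]
  exact (map_injective ψ.injective).eq_iff' (Matrix.map_zero _ (map_zero ψ))

theorem spectralProj_mul_mul_eq_zero_of_algEquiv (ϕ : F ≃ₐ[K] F) (σ : ι ≃ ι)
    (hσ : ∀ i, e (σ i) = ϕ (e i)) {l m : ι}
    (h : A.spectralProj e m * B.map (algebraMap K F) * A.spectralProj e l = 0) :
    A.spectralProj e (σ m) * B.map (algebraMap K F) * A.spectralProj e (σ l) = 0 := by
  rw [← spectralProj_comp_equiv, ← spectralProj_comp_equiv,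
    show e ∘ σ = (ϕ : F →ₐ[K] F) ∘ e from funext hσ, spectralProj_mul_mul_comp_eq_zero_iff]
  exact h

variable {A B} (he : Function.Injective e) (hcard : Fintype.card ι = Fintype.card n)
  (hroot : ∀ i, aeval (e i) A.charpoly = 0)
include he hcard hroot

theorem exists_spectralProj_mul_mul_eq_zero {p : Submodule F (n → F)} (hp₀ : p ≠ ⊥)
    (hp₁ : p ≠ ⊤) (hA : ∀ v ∈ p, A.map (algebraMap K F) *ᵥ v ∈ p)
    (hB : ∀ v ∈ p, B.map (algebraMap K F) *ᵥ v ∈ p) :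
    ∃ T : Set ι, (∃ l, l ∈ T) ∧ (∃ m, m ∉ T) ∧
      ∀ l ∈ T, ∀ m ∉ T,
        A.spectralProj e m * B.map (algebraMap K F) * A.spectralProj e l = 0 := by
  obtain ⟨b, hb⟩ := exists_basis_toLin'_apply_eq_smul he hcard hroot
  refine ⟨{i | b i ∈ p}, ?_, ?_, fun l hl m hm => ?_⟩
  · obtain ⟨x, hx, hx0⟩ := p.exists_mem_ne_zero_of_ne_bot hp₀
    obtain ⟨i, hi⟩ : ∃ i, b.repr x i ≠ 0 := by
      by_contra! h
      exact hx0 (b.repr.map_eq_zero_iff.1 (Finsupp.ext h))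
    exact ⟨i, Module.End.basis_mem_of_repr_ne_zero b hb he hA hx hi⟩
  · by_contra! h
    exact hp₁ (eq_top_iff.2 (b.span_eq.ge.trans (Submodule.span_le.2 (Set.range_subset_iff.2 h))))
  · apply toLin'.injective
    simpa [toLin'_spectralProj, ← Module.End.mul_eq_comp] using
      Module.End.aeval_lagrangeBasis_mul_mul_eq_zero b hb he hA hB hl hm

theorem commute_of_spectralProj_mul_mul_eq_zero
    (h : ∀ a c, a ≠ c →
      A.spectralProj e c * B.map (algebraMap K F) * A.spectralProj e a = 0) :
    Commute A B := by
  obtain ⟨b, hb⟩ := exists_basis_toLin'_apply_eq_smul he hcard hroot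
  have hF : Commute (toLin' (A.map (algebraMap K F))) (toLin' (B.map (algebraMap K F))) :=
    Module.End.commute_of_aeval_lagrangeBasis_mul_mul_eq_zero b hb he fun a c hac => by
      simpa [toLin'_spectralProj, ← Module.End.mul_eq_comp] using congr(toLin' $(h a c hac))
  refine map_injective (algebraMap K F).injective (toLin'.injective ?_)
  simpa only [Matrix.map_mul, toLin'_mul, ← Module.End.mul_eq_comp] using hF.eq

end Matrix

section BaseChange

variable {L : Type*} [Field L] (F : Type*) [Field F] [Algebra L F] {n : Type*}

noncomputable def Submodule.baseChangePi (W : Submodule L (n → L)) : Submodule F (n → F) :=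
  span F (W.map (LinearMap.compLeft (Algebra.linearMap L F) n))

variable {F} {W : Submodule L (n → L)}

namespace Submodule

open Matrix

theorem baseChangePi_ne_bot (hW : W ≠ ⊥) : W.baseChangePi F ≠ ⊥ := by
  obtain ⟨x, hx, hx0⟩ := W.exists_mem_ne_zero_of_ne_bot hW
  refine (Submodule.ne_bot_iff _).2 ⟨_, subset_span ⟨x, hx, rfl⟩, fun h => hx0 ?_⟩
  funext i
  simpa using congr_fun h i

variable [Fintype n]

theorem finrank_baseChangePi_le : finrank F (W.baseChangePi F) ≤ finrank L W := by
  set g := LinearMap.compLeft (Algebra.linearMap L F) n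
  set b := Module.finBasis L W
  have hW : W.map g = span L (Set.range (g ∘ W.subtype ∘ b)) := by
    rw [Set.range_comp, Set.range_comp, ← Submodule.map_span, ← Submodule.map_span, b.span_eq,
      Submodule.map_top, Submodule.range_subtype]
  calc finrank F (W.baseChangePi F) = finrank F (span F (Set.range (g ∘ W.subtype ∘ b))) := by
        rw [baseChangePi, hW, span_span_of_tower]
    _ ≤ Fintype.card (Fin (finrank L W)) := finrank_range_le_card _
    _ = finrank L W := Fintype.card_fin _

theorem baseChangePi_ne_top (hW : W ≠ ⊤) : W.baseChangePi F ≠ ⊤ := by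
  intro h
  have hlt := Submodule.finrank_lt hW
  have hle := finrank_baseChangePi_le (F := F) (W := W)
  rw [h, finrank_top, finrank_fintype_fun_eq_card] at hle
  rw [finrank_fintype_fun_eq_card] at hlt
  omega

theorem mulVec_mem_baseChangePi {K : Type*} [Field K] [Algebra K L] [Algebra K F]
    [IsScalarTower K L F] [DecidableEq n] (M : Matrix n n K)
    (hM : ∀ v ∈ W, M.map (algebraMap K L) *ᵥ v ∈ W) :
    ∀ v ∈ W.baseChangePi F, M.map (algebraMap K F) *ᵥ v ∈ W.baseChangePi F := by
  suffices W.baseChangePi F ≤ (W.baseChangePi F).comap (Matrix.toLin' (M.map (algebraMap K F))) from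
    fun v hv => this hv
  refine span_le.2 ?_
  rintro _ ⟨y, hy, rfl⟩
  refine subset_span ⟨_, hM y hy, funext fun i => ?_⟩
  change algebraMap L F ((M.map (algebraMap K L) *ᵥ y) i) =
    (M.map (algebraMap K F) *ᵥ (algebraMap L F ∘ y)) i
  rw [RingHom.map_mulVec, Matrix.map_map, ← RingHom.coe_comp, ← IsScalarTower.algebraMap_eq]

end Submodule

end BaseChange

namespace Equiv.Perm

theorem exists_mem_alternatingGroup_apply_eq_apply_eq {X : Type*} [Fintype X] [DecidableEq X]
    (hX : 3 ≤ Fintype.card X) {T : Set X} {l₀ m₀ : X} (hl₀ : l₀ ∈ T) (hm₀ : m₀ ∉ T) {a c : X}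
    (hac : a ≠ c) : ∃ π ∈ alternatingGroup X, ∃ l ∈ T, ∃ m ∉ T, π l = a ∧ π m = c := by
  have hlm : l₀ ≠ m₀ := ne_of_mem_of_not_mem hl₀ hm₀
  obtain ⟨g, hgl, hgm⟩ : ∃ g : Perm X, g l₀ = a ∧ g m₀ = c := by
    have hm₁ : swap l₀ a m₀ ≠ a := fun h => hlm ((swap l₀ a).injective (by simp [h]))
    exact ⟨swap (swap l₀ a m₀) c * swap l₀ a, by simp [swap_apply_of_ne_of_ne hm₁.symm hac],
      by simp⟩
  obtain ⟨ν, -, hν⟩ := Finset.exists_mem_notMem_of_card_lt_card (s := {l₀, m₀}) (t := .univ)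
    (Finset.card_le_two.trans_lt (by rw [Finset.card_univ]; omega))
  obtain ⟨hνl, hνm⟩ : ν ≠ l₀ ∧ ν ≠ m₀ := by simpa [not_or] using hν
  rcases Int.units_eq_one_or (sign g) with hg | hg
  · exact ⟨g, hg, l₀, hl₀, m₀, hm₀, hgl, hgm⟩
  by_cases hνT : ν ∈ T
  · refine ⟨g * swap l₀ ν, by simp [mem_alternatingGroup, hg, sign_swap hνl.symm], ν, hνT, m₀,
      hm₀, by simp [hgl], by simp [swap_apply_of_ne_of_ne hlm.symm hνm.symm, hgm]⟩
  · refine ⟨g * swap m₀ ν, by simp [mem_alternatingGroup, hg, sign_swap hνm.symm], l₀, hl₀, ν,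
      hνT, by simp [swap_apply_of_ne_of_ne hlm hνl.symm, hgl], by simp [hgm]⟩

end Equiv.Perm

end

/-- Let `n ≥ 3`, `K` perfect, `A, B ∈ Mₙ(K)` with `χ_A` irreducible over `K` and Galois group
(as a permutation group on the roots of `χ_A`) equal to the full symmetric group or the
alternating group. If `A` and `B` have a common invariant proper nonzero subspace over an
extension field `L` of `K`, then `AB = BA`. -/
theorem stmt_7 {n : ℕ} (hn : 3 ≤ n) {K : Type*} [Field K] [PerfectField K]
    {L : Type*} [Field L] [Algebra K L]
    (A B : Matrix (Fin n) (Fin n) K)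
    (hirr : Irreducible A.charpoly)
    [DecidableEq (A.charpoly.rootSet A.charpoly.SplittingField)]
    (hgal : (Polynomial.Gal.galActionHom A.charpoly A.charpoly.SplittingField).range = ⊤ ∨
      (Polynomial.Gal.galActionHom A.charpoly A.charpoly.SplittingField).range =
        alternatingGroup (A.charpoly.rootSet A.charpoly.SplittingField))
    (W : Submodule L (Fin n → L))
    (hW1 : W ≠ ⊥) (hW2 : W ≠ ⊤)
    (hA : ∀ v ∈ W, (A.map (algebraMap K L)).mulVec v ∈ W)
    (hB : ∀ v ∈ W, (B.map (algebraMap K L)).mulVec v ∈ W) :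
    A * B = B * A := by
  open Polynomial in
  have hcard :
      Fintype.card (A.charpoly.rootSet A.charpoly.SplittingField) = Fintype.card (Fin n) := by
    rw [card_rootSet_eq_natDegree (PerfectField.separable_of_irreducible hirr)
      (SplittingField.splits _), Matrix.charpoly_natDegree_eq_dim]
  have hroot (ρ : A.charpoly.rootSet A.charpoly.SplittingField) :
      aeval (ρ : A.charpoly.SplittingField) A.charpoly = 0 :=
    (mem_rootSet.1 ρ.2).2
  let φ : A.charpoly.SplittingField →ₐ[K] AlgebraicClosure L := IsAlgClosed.lift
  obtain ⟨T, ⟨l₀, hl₀⟩, ⟨m₀, hm₀⟩, hT⟩ := Matrix.exists_spectralProj_mul_mul_eq_zero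
    (e := φ ∘ (↑)) (φ.injective.comp Subtype.val_injective) hcard
    (fun ρ => by rw [Function.comp_apply, aeval_algHom_apply, hroot, map_zero])
    (Submodule.baseChangePi_ne_bot hW1) (Submodule.baseChangePi_ne_top hW2)
    (Submodule.mulVec_mem_baseChangePi A hA)
    (Submodule.mulVec_mem_baseChangePi B hB)
  refine (Matrix.commute_of_spectralProj_mul_mul_eq_zero Subtype.val_injective hcard hroot
    fun a c hac => ?_).eq
  have halt :
      alternatingGroup _ ≤ (Gal.galActionHom A.charpoly A.charpoly.SplittingField).range := by
    rcases hgal with h | h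
    · exact h ▸ le_top
    · exact h.ge
  obtain ⟨π, hπ, l, hl, m, hm, rfl, rfl⟩ :=
    Equiv.Perm.exists_mem_alternatingGroup_apply_eq_apply_eq (by rwa [hcard, Fintype.card_fin])
      hl₀ hm₀ hac
  obtain ⟨σ, rfl⟩ := halt hπ
  obtain ⟨ϕ, rfl⟩ := Gal.restrict_surjective A.charpoly A.charpoly.SplittingField σ
  exact A.spectralProj_mul_mul_eq_zero_of_algEquiv B ϕ _ (Gal.galActionHom_restrict _ _ ϕ)
    ((A.spectralProj_mul_mul_comp_eq_zero_iff B φ l m).1 (hT l hl m hm))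
end

section
/- Let K be a perfect field, L an extension field, and A ∈ M_n(K) with n distinct eigenvalues in L. Then the set Z of matrices B ∈ M_n(K) such that A and B have a common eigenvector in Lⁿ is a union of n K-linear subspaces of M_n(K), each containing the commutant of A. -/
open Polynomial Matrix Module

lemma eval_charpoly' {m : ℕ} {F : Type*} [Field F] (M : Matrix (Fin m) (Fin m) F) (a : F) :
    M.charpoly.eval a = (a • (1 : Matrix (Fin m) (Fin m) F) - M).det := by
  rw [Matrix.charpoly, ← Polynomial.coe_evalRingHom, RingHom.map_det]
  congr 1
  ext i j
  by_cases h : i = j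
  · subst h; simp [Matrix.charmatrix_apply_eq]
  · simp [Matrix.charmatrix_apply_ne _ _ _ h, Matrix.one_apply_ne h]

/-- `B ↦ (B.map (algebraMap K L)).mulVec w` as a `K`-linear map. -/
noncomputable def psiMap {n : ℕ} {K L : Type*} [Field K] [Field L] [Algebra K L]
    (w : Fin n → L) : Matrix (Fin n) (Fin n) K →ₗ[K] (Fin n → L) where
  toFun B := (B.map (algebraMap K L)).mulVec w
  map_add' B C := by
    ext j
    simp [Matrix.mulVec, dotProduct, Finset.sum_add_distrib, add_mul]
  map_smul' c B := by
    have h : (c • B).map (algebraMap K L) = algebraMap K L c • B.map (algebraMap K L) := by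
      ext j k
      rw [Matrix.map_apply, Matrix.smul_apply, Matrix.smul_apply, Matrix.map_apply,
        smul_eq_mul, _root_.map_mul, smul_eq_mul]
    simp only [h, smul_mulVec, RingHom.id_apply]
    ext j
    simp [Algebra.smul_def]

/-- Let `K` be perfect, `L` an extension field, and `A ∈ Mₙ(K)` with `n` distinct eigenvalues
in `L`. Then the set of `B ∈ Mₙ(K)` such that `A` and `B` have a common eigenvector in `Lⁿ`
is a union of `n` K-subspaces of `Mₙ(K)`, each containing the commutant of `A`. -/
theorem stmt_11 {n : ℕ} {K : Type*} [Field K] [PerfectField K]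
    {L : Type*} [Field L] [Algebra K L]
    (A : Matrix (Fin n) (Fin n) K)
    (μ : Fin n → L) (hμ : Function.Injective μ)
    (hchar : A.charpoly.map (algebraMap K L) =
      ∏ i, (Polynomial.X - Polynomial.C (μ i))) :
    ∃ W : Fin n → Submodule K (Matrix (Fin n) (Fin n) K),
      (∀ i, ∀ C : Matrix (Fin n) (Fin n) K, A * C = C * A → C ∈ W i) ∧
      {B : Matrix (Fin n) (Fin n) K | ∃ u : Fin n → L, u ≠ 0 ∧ ∃ α β : L,
          (A.map (algebraMap K L)).mulVec u = α • u ∧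
          (B.map (algebraMap K L)).mulVec u = β • u} =
        ⋃ i, (W i : Set (Matrix (Fin n) (Fin n) K)) := by
  classical
  set A' : Matrix (Fin n) (Fin n) L := A.map (algebraMap K L) with hA'
  have hcp : A'.charpoly = ∏ i, (X - C (μ i)) := by
    rw [hA', Matrix.charpoly_map]; exact hchar
  set f : Module.End L (Fin n → L) := Matrix.mulVecLin A' with hfdef
  set E : Fin n → Submodule L (Fin n → L) := fun i => Module.End.eigenspace f (μ i) with hE
  have hmemE : ∀ i v, v ∈ E i ↔ A'.mulVec v = μ i • v := by
    intro i v
    rw [hE, Module.End.mem_eigenspace_iff]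
    exact Iff.rfl
  have hev : ∀ α : L, (α • (1 : Matrix (Fin n) (Fin n) L) - A').det = ∏ j, (α - μ j) := by
    intro α
    rw [← eval_charpoly', hcp, eval_prod]
    simp
  have hexu : ∀ i, ∃ u : Fin n → L, u ≠ 0 ∧ u ∈ E i := by
    intro i
    have hdet : (μ i • (1 : Matrix (Fin n) (Fin n) L) - A').det = 0 := by
      rw [hev]
      exact Finset.prod_eq_zero (Finset.mem_univ i) (sub_self _)
    obtain ⟨v, hv, hv0⟩ := (Matrix.exists_mulVec_eq_zero_iff).2 hdet
    refine ⟨v, hv, (hmemE i v).2 ?_⟩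
    rw [sub_mulVec, smul_mulVec, one_mulVec, sub_eq_zero] at hv0
    exact hv0.symm
  choose u hu0 huE using hexu
  have hind : iSupIndep E := (Module.End.eigenspaces_iSupIndep f).comp hμ
  -- each eigenspace is one-dimensional, spanned by `u i`
  have hsum : ∀ s : Finset (Fin n), finrank L ↥(s.sup E) = ∑ j ∈ s, finrank L (E j) := by
    intro s
    induction s using Finset.cons_induction with
    | empty => simp
    | cons a s ha ih =>
      have hdisj : Disjoint (E a) (s.sup E) := by
        refine (hind a).mono_right ?_
        refine Finset.sup_le fun j hj => ?_
        exact le_iSup₂ (f := fun j (_ : j ≠ a) => E j) j (by rintro rfl; exact ha hj)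
      rw [Finset.sup_cons, Finset.sum_cons, ← ih]
      have := Submodule.finrank_sup_add_finrank_inf_eq (E a) (s.sup E)
      rw [hdisj.eq_bot] at this
      simpa using this
  have hle : ∑ j, finrank L (E j) ≤ n := by
    calc ∑ j, finrank L (E j) = finrank L ↥(Finset.univ.sup E) := (hsum Finset.univ).symm
      _ ≤ finrank L (Fin n → L) := Submodule.finrank_le _
      _ = n := by simp
  have h1le : ∀ i, 1 ≤ finrank L (E i) := by
    intro i
    have : finrank L (Submodule.span L {u i}) ≤ finrank L (E i) :=
      Submodule.finrank_mono (Submodule.span_le.2 (Set.singleton_subset_iff.2 (huE i)))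
    rwa [finrank_span_singleton (hu0 i)] at this
  have hdim : ∀ i, finrank L (E i) = 1 := by
    by_contra h
    push_neg at h
    obtain ⟨i, hi⟩ := h
    have h2 : 1 < finrank L (E i) := lt_of_le_of_ne (h1le i) (Ne.symm hi)
    have : ∑ j : Fin n, 1 < ∑ j, finrank L (E j) :=
      Finset.sum_lt_sum (fun j _ => h1le j) ⟨i, Finset.mem_univ i, h2⟩
    simp only [Finset.sum_const, Finset.card_univ, Fintype.card_fin, smul_eq_mul, mul_one] at this
    omega
  have hspan : ∀ i, E i = Submodule.span L {u i} := by
    intro i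
    refine (Submodule.eq_of_le_of_finrank_le
      (Submodule.span_le.2 (Set.singleton_subset_iff.2 (huE i))) ?_).symm
    rw [hdim i, finrank_span_singleton (hu0 i)]
  -- the subspaces
  refine ⟨fun i => Submodule.comap (psiMap (K := K) (u i))
      ((Submodule.span L {u i}).restrictScalars K), ?_, ?_⟩
  · -- commutant
    intro i Cm hC
    have hmul : A' * Cm.map (algebraMap K L) = Cm.map (algebraMap K L) * A' := by
      rw [hA', ← Matrix.map_mul, ← Matrix.map_mul, hC]
    have hmem : (Cm.map (algebraMap K L)).mulVec (u i) ∈ E i := by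
      rw [hmemE]
      rw [mulVec_mulVec, hmul, ← mulVec_mulVec, (hmemE i (u i)).1 (huE i), mulVec_smul]
    rw [hspan i] at hmem
    simpa [psiMap, Submodule.mem_comap] using hmem
  · ext B
    simp only [Set.mem_setOf_eq, Set.mem_iUnion, SetLike.mem_coe, Submodule.mem_comap,
      Submodule.restrictScalars_mem, psiMap, LinearMap.coe_mk, AddHom.coe_mk]
    constructor
    · rintro ⟨v, hv0, α, β, hAv, hBv⟩
      -- α is one of the μ i
      have hdet : (α • (1 : Matrix (Fin n) (Fin n) L) - A').det = 0 := by
        rw [← Matrix.exists_mulVec_eq_zero_iff]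
        exact ⟨v, hv0, by rw [sub_mulVec, smul_mulVec, one_mulVec, hAv, sub_self]⟩
      rw [hev] at hdet
      obtain ⟨i, -, hi⟩ := Finset.prod_eq_zero_iff.1 hdet
      have hα : α = μ i := sub_eq_zero.1 hi
      refine ⟨i, ?_⟩
      have hvE : v ∈ E i := (hmemE i v).2 (by rw [hAv, hα])
      rw [hspan i, Submodule.mem_span_singleton] at hvE
      obtain ⟨c, hc⟩ := hvE
      have hcne : c ≠ 0 := by rintro rfl; simp at hc; exact hv0 hc.symm
      have : (B.map (algebraMap K L)).mulVec (u i) = β • u i := by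
        have h1 : c • (B.map (algebraMap K L)).mulVec (u i) = c • (β • u i) := by
          rw [← mulVec_smul, hc, hBv, ← hc, smul_comm]
        exact smul_right_injective _ hcne h1
      rw [this]
      exact Submodule.smul_mem _ _ (Submodule.mem_span_singleton_self _)
    · rintro ⟨i, hB⟩
      rw [Submodule.mem_span_singleton] at hB
      obtain ⟨β, hβ⟩ := hB
      exact ⟨u i, hu0 i, μ i, β, (hmemE i (u i)).1 (huE i), hβ.symm⟩
end
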